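/- Singleton-type bound for batch/PIR codes: let G be a k×n matrix over a finite field F_q with property A_t, where k ≥ 1. Then n ≥ k + t − 1. -/

import Mathlib

/-- Some `F`-linear combination of the columns of `G` indexed by `T` equals the vector `v`. -/
def ColLinComb {F : Type*} [Field F] {k n : ℕ} (G : Matrix (Fin k) (Fin n) F)
    (T : Finset (Fin n)) (v : Fin k → F) : Prop :=
  ∃ c : Fin n → F, ∑ j ∈ T, c j • G.transpose j = v

/-- `G` has property `A_t` (generates a `t`-server PIR code). -/
def PropertyA {F : Type*} [Field F] {k n : ℕ} (G : Matrix (Fin k) (Fin n) F) (t : ℕ) : Prop :=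
  ∀ i : Fin k, ∃ T : Fin t → Finset (Fin n),
    (∀ j₁ j₂ : Fin t, j₁ ≠ j₂ → Disjoint (T j₁) (T j₂)) ∧
    ∀ j : Fin t, ColLinComb G (T j) (Pi.single i 1)

/-!
Each of the `t` disjoint recovery sets for a coordinate `i` with `x i ≠ 0` must meet the support
of the codeword `x ᵥ* G`, so every nonzero codeword has weight at least `t`. Deleting any `t - 1`
coordinates therefore keeps the encoding map `x ↦ x ᵥ* G` injective, and comparing dimensions
gives `k ≤ n - (t - 1)`.
-/

open Finset Matrix

theorem ColLinComb.exists_vecMul_ne_zero {F : Type*} [Field F] {k n : ℕ}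
    {G : Matrix (Fin k) (Fin n) F} {T : Finset (Fin n)} {v : Fin k → F}
    (h : ColLinComb G T v) {x : Fin k → F} (hx : x ⬝ᵥ v ≠ 0) :
    ∃ m ∈ T, (x ᵥ* G) m ≠ 0 := by
  obtain ⟨c, rfl⟩ := h
  by_contra! hzero
  apply hx
  rw [dotProduct_sum]
  refine sum_eq_zero fun m hm => ?_
  rw [dotProduct_smul]
  exact smul_eq_zero_of_right _ (hzero m hm)

theorem PropertyA.le_hammingNorm_vecMul {F : Type*} [Field F] [DecidableEq F] {k n t : ℕ}
    {G : Matrix (Fin k) (Fin n) F} (hA : PropertyA G t) {x : Fin k → F} (hx : x ≠ 0) :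
    t ≤ hammingNorm (x ᵥ* G) := by
  obtain ⟨i, hxi⟩ := Function.ne_iff.mp hx
  obtain ⟨T, hdisj, hcomb⟩ := hA i
  have hmeet : ∀ j, ∃ m ∈ T j, (x ᵥ* G) m ≠ 0 := fun j =>
    (hcomb j).exists_vecMul_ne_zero (by simpa using hxi)
  choose f hfT hf using hmeet
  calc t = #(univ : Finset (Fin t)) := by simp
    _ ≤ hammingNorm (x ᵥ* G) := by
      refine card_le_card_of_injOn f (fun j _ => by simpa [hammingNorm] using hf j) ?_
      intro j₁ _ j₂ _ hf₁₂
      by_contra hne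
      exact disjoint_left.mp (hdisj j₁ j₂ hne) (hfT j₁) (hf₁₂ ▸ hfT j₂)

theorem Matrix.card_add_card_le_of_card_lt_hammingNorm_vecMul {F κ ι : Type*} [DivisionRing F]
    [DecidableEq F] [Fintype κ] [Fintype ι] (G : Matrix κ ι F) (S : Finset ι)
    (hS : ∀ x : κ → F, x ≠ 0 → #S < hammingNorm (x ᵥ* G)) :
    Fintype.card κ + #S ≤ Fintype.card ι := by
  classical
  let puncture : (κ → F) →ₗ[F] ({m // m ∉ S} → F) :=
    LinearMap.funLeft F F Subtype.val ∘ₗ G.vecMulLinear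
  have hinj : Function.Injective puncture := by
    refine (injective_iff_map_eq_zero puncture).mpr fun x hx => ?_
    by_contra hx0
    refine (hS x hx0).not_ge (card_le_card fun m hm => ?_)
    by_contra hmS
    exact (mem_filter.mp hm).2 (congrFun hx ⟨m, hmS⟩)
  have hdim := LinearMap.finrank_le_finrank_of_injective hinj
  rw [Module.finrank_fintype_fun_eq_card, Module.finrank_fintype_fun_eq_card,
    Fintype.card_subtype_compl, Fintype.card_coe] at hdim
  have := card_le_univ S
  omega

theorem singleton_bound_PIR_general {F : Type*} [Field F] {k n t : ℕ}
    (hk : 1 ≤ k) (ht : 1 ≤ t) (G : Matrix (Fin k) (Fin n) F) (hA : PropertyA G t) :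
    k + t - 1 ≤ n := by
  classical
  have hx : (Pi.single ⟨0, hk⟩ 1 : Fin k → F) ≠ 0 := by simp
  have htn : t ≤ n :=
    (hA.le_hammingNorm_vecMul hx).trans (hammingNorm_le_card_fintype.trans_eq (by simp))
  obtain ⟨S, -, hS⟩ := exists_subset_card_eq (s := (univ : Finset (Fin n))) (n := t - 1)
    (by rw [card_univ, Fintype.card_fin]; omega)
  have hbound := G.card_add_card_le_of_card_lt_hammingNorm_vecMul S fun x hx => by
    have := hA.le_hammingNorm_vecMul hx
    omega
  simp only [Fintype.card_fin] at hbound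
  omega

/-- **Singleton-type bound for batch/PIR codes.**  If a `k×n` matrix `G` over a finite
field has property `A_t` with `k ≥ 1` (and `t ≥ 1`), then `n ≥ k + t − 1`. -/
theorem singleton_bound_PIR {F : Type*} [Field F] [Fintype F] {k n t : ℕ}
    (hk : 1 ≤ k) (ht : 1 ≤ t) (G : Matrix (Fin k) (Fin n) F) (hA : PropertyA G t) :
    k + t - 1 ≤ n :=
  singleton_bound_PIR_general hk ht G hA
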